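/- arXiv:1604.07791 — 3 statements merged into one kernel-verified Lean document; each statement's English description precedes it below -/
import Mathlib

section
/- Let N = pq with p, q odd primes and v := ν₂(p−1) < ν₂(q−1), so that v = ν₂(N−1). Let b ∈ ℤ with gcd(b, N) = 1. Then for every i ≥ v + 1, (b^{2^{i-1}}|N)_{2^i} = (b|q)_2 if i ≤ ν₂(q−1), and (b^{2^{i-1}}|N)_{2^i} = 1 if i > ν₂(q−1). -/
/- The rational `2^k`-th power residue symbol `(a|p)_{2^k}` for a prime `p`. -/
open Classical in
noncomputable def rps (k p : ℕ) (a : ℤ) : ℤ :=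
  if ∃ x : ℤ, x ^ (2 ^ k) ≡ a [ZMOD (p : ℤ)] then 1 else -1

/- The rational `2^k`-th power residue symbol `(a|n)_{2^k}` for composite `n`. -/
noncomputable def rpsN (k n : ℕ) (a : ℤ) : ℤ :=
  (n.primeFactorsList.map fun p => rps k p a).prod

private lemma exists_int_iff (r n : ℕ) [NeZero r] (a : ℤ) :
    (∃ x : ℤ, x ^ n ≡ a [ZMOD (r : ℤ)]) ↔ ∃ y : ZMod r, y ^ n = (a : ZMod r) := by
  constructor
  · rintro ⟨x, hx⟩
    refine ⟨(x : ZMod r), ?_⟩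
    have := (ZMod.intCast_eq_intCast_iff _ _ _).mpr hx
    push_cast at this
    exact this
  · rintro ⟨y, hy⟩
    refine ⟨(y.val : ℤ), ?_⟩
    rw [← ZMod.intCast_eq_intCast_iff]
    push_cast
    rw [ZMod.natCast_val, ZMod.cast_id]
    exact hy

private lemma rps_eq_one {r : ℕ} [NeZero r] {k : ℕ} {a : ℤ}
    (h : ∃ y : ZMod r, y ^ (2 ^ k) = (a : ZMod r)) : rps k r a = 1 := by
  unfold rps
  rw [if_pos ((exists_int_iff r (2 ^ k) a).mpr h)]

private lemma rps_eq_neg_one {r : ℕ} [NeZero r] {k : ℕ} {a : ℤ}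
    (h : ¬ ∃ y : ZMod r, y ^ (2 ^ k) = (a : ZMod r)) : rps k r a = -1 := by
  unfold rps
  rw [if_neg (fun hc => h ((exists_int_iff r (2 ^ k) a).mp hc))]

private lemma rpsN_mul {p q : ℕ} (hp : p.Prime) (hq : q.Prime) (k : ℕ) (a : ℤ) :
    rpsN k (p * q) a = rps k p a * rps k q a := by
  unfold rpsN
  have h := Nat.perm_primeFactorsList_mul hp.pos.ne' hq.pos.ne'
  rw [List.Perm.prod_eq (h.map _), Nat.primeFactorsList_prime hp,
    Nat.primeFactorsList_prime hq]
  simp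

/-- If `b` is a square mod `r`, then `b^(2^(i-1))` is a `2^i`-th power mod `r`. -/
private lemma helperA {r : ℕ} {b : ℤ} {i : ℕ} (hi : 1 ≤ i)
    (h : ∃ y : ZMod r, y ^ 2 = (b : ZMod r)) :
    ∃ y : ZMod r, y ^ (2 ^ i) = (b : ZMod r) ^ (2 ^ (i - 1)) := by
  obtain ⟨y, hy⟩ := h
  refine ⟨y, ?_⟩
  have h2 : 2 ^ i = 2 * 2 ^ (i - 1) := by
    rw [← pow_succ']
    congr 1
    omega
  rw [h2, pow_mul, hy]

/-- If `ν₂(r-1) < i`, then `b^(2^(i-1))` is always a `2^i`-th power mod `r`. -/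
private lemma helperB {r : ℕ} (hr : r.Prime) {b : ℤ} (hrb : ¬ (r : ℤ) ∣ b) {i : ℕ}
    (hi : 1 ≤ i) (he : padicValNat 2 (r - 1) < i) :
    ∃ y : ZMod r, y ^ (2 ^ i) = (b : ZMod r) ^ (2 ^ (i - 1)) := by
  haveI : Fact r.Prime := ⟨hr⟩
  haveI : Fact (Nat.Prime 2) := ⟨Nat.prime_two⟩
  have hr1 : r - 1 ≠ 0 := by have := hr.two_le; omega
  -- the gcd of 2^i and r-1 divides 2^(i-1)
  have hg : Nat.gcd (2 ^ i) (r - 1) ∣ 2 ^ (i - 1) := by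
    obtain ⟨j, hj, hgj⟩ := (Nat.dvd_prime_pow Nat.prime_two).mp
      (Nat.gcd_dvd_left (2 ^ i) (r - 1))
    have hjr : (2 : ℕ) ^ j ∣ r - 1 := hgj ▸ Nat.gcd_dvd_right (2 ^ i) (r - 1)
    have hje : j ≤ padicValNat 2 (r - 1) := (padicValNat_dvd_iff_le hr1).mp hjr
    rw [hgj]
    exact pow_dvd_pow 2 (by omega)
  obtain ⟨c, hc⟩ := hg
  -- Bezout: 2^(i-1) = 2^i * u + (r-1) * w over ℤ
  have hbez : ∃ u w : ℤ, (2 : ℤ) ^ (i - 1) = 2 ^ i * u + ((r - 1 : ℕ) : ℤ) * w := by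
    have key := Int.gcd_eq_gcd_ab ((2 ^ i : ℕ) : ℤ) ((r - 1 : ℕ) : ℤ)
    rw [Int.gcd_natCast_natCast] at key
    refine ⟨Int.gcdA ((2 ^ i : ℕ) : ℤ) ((r - 1 : ℕ) : ℤ) * c,
      Int.gcdB ((2 ^ i : ℕ) : ℤ) ((r - 1 : ℕ) : ℤ) * c, ?_⟩
    have : ((2 : ℤ) ^ (i - 1)) = ((Nat.gcd (2 ^ i) (r - 1) : ℤ)) * c := by
      exact_mod_cast hc
    rw [this, key]
    push_cast
    ring
  obtain ⟨u, w, huw⟩ := hbez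
  have hb0 : (b : ZMod r) ≠ 0 := by
    rw [Ne, ZMod.intCast_zmod_eq_zero_iff_dvd]
    exact hrb
  set U : (ZMod r)ˣ := Units.mk0 _ hb0 with hU
  have hU1 : U ^ (((r - 1 : ℕ) : ℤ)) = 1 := by
    rw [zpow_natCast]
    exact ZMod.units_pow_card_sub_one_eq_one r U
  have key : (U ^ u) ^ ((2 : ℕ) ^ i) = U ^ ((2 : ℕ) ^ (i - 1)) := by
    have h1 : (U ^ u) ^ ((2 : ℕ) ^ i) = U ^ ((2 : ℤ) ^ i * u) := by
      rw [← zpow_natCast (U ^ u) (2 ^ i), ← zpow_mul, mul_comm]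
      push_cast
      ring_nf
    have h2 : U ^ ((2 : ℕ) ^ (i - 1)) = U ^ ((2 : ℤ) ^ (i - 1)) := by
      rw [← zpow_natCast U (2 ^ (i - 1))]
      push_cast
      ring_nf
    rw [h1, h2, huw, zpow_add, zpow_mul U ((r - 1 : ℕ) : ℤ) w, hU1, one_zpow, mul_one]
  refine ⟨((U ^ u : (ZMod r)ˣ) : ZMod r), ?_⟩
  have := congrArg (fun z : (ZMod r)ˣ => (z : ZMod r)) key
  simpa [hU] using this

/-- If `2^i ∣ r - 1` and `b^(2^(i-1))` is a `2^i`-th power mod `r`, then `b` is a square. -/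
private lemma helperC {r : ℕ} (hr : r.Prime) (hro : Odd r) {b : ℤ} (hrb : ¬ (r : ℤ) ∣ b)
    {i : ℕ} (hi : 1 ≤ i) (hdvd : 2 ^ i ∣ r - 1)
    (h : ∃ y : ZMod r, y ^ (2 ^ i) = (b : ZMod r) ^ (2 ^ (i - 1))) :
    ∃ y : ZMod r, y ^ 2 = (b : ZMod r) := by
  haveI : Fact r.Prime := ⟨hr⟩
  obtain ⟨x, hx⟩ := h
  have hb0 : (b : ZMod r) ≠ 0 := by
    rw [Ne, ZMod.intCast_zmod_eq_zero_iff_dvd]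
    exact hrb
  have hx0 : x ≠ 0 := by
    intro h0
    rw [h0, zero_pow (by positivity)] at hx
    exact pow_ne_zero _ hb0 hx.symm
  obtain ⟨m, hm⟩ := hdvd
  obtain ⟨k, hk⟩ := hro
  have h2 : 2 ^ i = 2 * 2 ^ (i - 1) := by
    rw [← pow_succ']
    congr 1
    omega
  have hm2 : r - 1 = 2 * (2 ^ (i - 1) * m) := by rw [hm, h2, mul_assoc]
  have hhalf : r / 2 = 2 ^ (i - 1) * m := by omega
  have heul : (b : ZMod r) ^ (r / 2) = 1 := by
    rw [hhalf, pow_mul, ← hx, ← pow_mul, ← hm, ZMod.pow_card_sub_one_eq_one hx0]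
  obtain ⟨c, hc⟩ := (ZMod.euler_criterion r hb0).mpr heul
  exact ⟨c, by rw [sq, ← hc]⟩

theorem statement15 (p q v : ℕ) (hp : p.Prime) (hq : q.Prime)
    (hpo : Odd p) (hqo : Odd q)
    (hv : padicValNat 2 (p - 1) = v) (hlt : v < padicValNat 2 (q - 1))
    (b : ℤ) (hb : Int.gcd b ((p : ℤ) * q) = 1) :
    padicValNat 2 (p * q - 1) = v ∧
    ∀ i : ℕ, v + 1 ≤ i →
      (i ≤ padicValNat 2 (q - 1) → rpsN i (p * q) (b ^ 2 ^ (i - 1)) = rps 1 q b) ∧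
      (padicValNat 2 (q - 1) < i → rpsN i (p * q) (b ^ 2 ^ (i - 1)) = 1) := by
  haveI : Fact (Nat.Prime 2) := ⟨Nat.prime_two⟩
  haveI : Fact p.Prime := ⟨hp⟩
  haveI : Fact q.Prime := ⟨hq⟩
  haveI : NeZero p := ⟨hp.pos.ne'⟩
  haveI : NeZero q := ⟨hq.pos.ne'⟩
  have hp2 : 2 ≤ p := hp.two_le
  have hq2 : 2 ≤ q := hq.two_le
  have hp1 : p - 1 ≠ 0 := by omega
  have hq1 : q - 1 ≠ 0 := by omega
  -- coprimality
  have hbp : ¬ (p : ℤ) ∣ b := by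
    intro hd
    have hd2 : (p : ℤ) ∣ (p : ℤ) * q := ⟨q, rfl⟩
    have := Int.dvd_coe_gcd hd hd2
    rw [hb] at this
    have := Int.le_of_dvd one_pos this
    exact_mod_cast absurd this (by push_cast; omega)
  have hbq : ¬ (q : ℤ) ∣ b := by
    intro hd
    have hd2 : (q : ℤ) ∣ (p : ℤ) * q := ⟨p, mul_comm _ _⟩
    have := Int.dvd_coe_gcd hd hd2
    rw [hb] at this
    have := Int.le_of_dvd one_pos this
    exact_mod_cast absurd this (by push_cast; omega)
  -- part 1
  have hqle : q ≤ p * q := Nat.le_mul_of_pos_left q hp.pos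
  have hsplit : p * q - 1 = (p - 1) * q + (q - 1) := by
    rw [Nat.sub_mul, one_mul]
    omega
  have hdvdp1 : (2 : ℕ) ^ v ∣ p - 1 := by
    rw [← hv]; exact pow_padicValNat_dvd
  have hdvdq1 : (2 : ℕ) ^ (v + 1) ∣ q - 1 :=
    (padicValNat_dvd_iff_le hq1).mpr (by omega)
  have hdvdN : (2 : ℕ) ^ v ∣ p * q - 1 := by
    rw [hsplit]
    exact Dvd.dvd.add (Dvd.dvd.mul_right hdvdp1 q)
      ((padicValNat_dvd_iff_le hq1).mpr (by omega))
  have hq_odd : ¬ (2 : ℕ) ∣ q := by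
    obtain ⟨k, hk⟩ := hqo; omega
  have hnotdvdN : ¬ (2 : ℕ) ^ (v + 1) ∣ p * q - 1 := by
    intro hcon
    have h1 : (2 : ℕ) ^ (v + 1) ∣ (p - 1) * q := by
      have := Nat.dvd_sub hcon hdvdq1
      have heq : p * q - 1 - (q - 1) = (p - 1) * q := by
        rw [hsplit]; omega
      rwa [heq] at this
    have hcop : Nat.Coprime (2 ^ (v + 1)) q :=
      Nat.Coprime.pow_left _ (Nat.prime_two.coprime_iff_not_dvd.mpr hq_odd)
    have h2 : (2 : ℕ) ^ (v + 1) ∣ p - 1 := hcop.dvd_of_dvd_mul_right h1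
    have := (padicValNat_dvd_iff_le hp1).mp h2
    omega
  have hNne : p * q - 1 ≠ 0 := by
    have : 2 * 2 ≤ p * q := Nat.mul_le_mul hp2 hq2
    omega
  have hval : padicValNat 2 (p * q - 1) = v := by
    have h1 : v ≤ padicValNat 2 (p * q - 1) := (padicValNat_dvd_iff_le hNne).mp hdvdN
    have h2 : ¬ (v + 1 ≤ padicValNat 2 (p * q - 1)) := fun h =>
      hnotdvdN ((padicValNat_dvd_iff_le hNne).mpr h)
    omega
  refine ⟨hval, fun i hi => ?_⟩
  have hi1 : 1 ≤ i := by omega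
  -- rps at p is always 1
  have hrpsp : rps i p (b ^ 2 ^ (i - 1)) = 1 := by
    apply rps_eq_one
    have := helperB hp hbp hi1 (by omega : padicValNat 2 (p - 1) < i)
    obtain ⟨y, hy⟩ := this
    exact ⟨y, by push_cast; exact hy⟩
  constructor
  · intro hile
    have hdvdqi : (2 : ℕ) ^ i ∣ q - 1 := (padicValNat_dvd_iff_le hq1).mpr hile
    rw [rpsN_mul hp hq, hrpsp, one_mul]
    by_cases hsq : ∃ y : ZMod q, y ^ 2 = (b : ZMod q)
    · have h1 : rps i q (b ^ 2 ^ (i - 1)) = 1 := by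
        apply rps_eq_one
        obtain ⟨y, hy⟩ := helperA hi1 hsq
        exact ⟨y, by push_cast; exact hy⟩
      have h2 : rps 1 q b = 1 := rps_eq_one (by
        obtain ⟨y, hy⟩ := hsq
        exact ⟨y, by norm_num; exact hy⟩)
      rw [h1, h2]
    · have h1 : rps i q (b ^ 2 ^ (i - 1)) = -1 := by
        apply rps_eq_neg_one
        intro ⟨y, hy⟩
        apply hsq
        apply helperC hq hqo hbq hi1 hdvdqi
        exact ⟨y, by push_cast at hy; exact hy⟩
      have h2 : rps 1 q b = -1 := rps_eq_neg_one (by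
        intro ⟨y, hy⟩
        exact hsq ⟨y, by norm_num at hy; exact hy⟩)
      rw [h1, h2]
  · intro hgt
    rw [rpsN_mul hp hq, hrpsp, one_mul]
    apply rps_eq_one
    obtain ⟨y, hy⟩ := helperB hq hbq hi1 hgt
    exact ⟨y, by push_cast; exact hy⟩
end

section
/- Let N = pq with p, q distinct primes and N ≡ 3 (mod 4). Let a ∈ ℤ with gcd(a, N) = 1 and (a|N)_2 = 1. Then a is a quadratic residue modulo N (i.e. there exists x ∈ ℤ with x² ≡ a (mod N)) if and only if (a²|N)_4 = 1. -/
lemma rps_eq_one_iff (k r : ℕ) (a : ℤ) :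
    rps k r a = 1 ↔ ∃ y : ZMod r, y ^ (2 ^ k) = (a : ZMod r) := by
  have key : (∃ x : ℤ, x ^ (2 ^ k) ≡ a [ZMOD (r : ℤ)]) ↔
      ∃ y : ZMod r, y ^ (2 ^ k) = (a : ZMod r) := by
    constructor
    · rintro ⟨x, hx⟩
      refine ⟨(x : ZMod r), ?_⟩
      have := (ZMod.intCast_eq_intCast_iff _ _ _).mpr hx
      push_cast at this
      exact this
    · rintro ⟨y, hy⟩
      refine ⟨(ZMod.cast y : ℤ), (ZMod.intCast_eq_intCast_iff _ _ _).mp ?_⟩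
      push_cast [ZMod.intCast_zmod_cast]
      exact hy
  unfold rps
  split_ifs with h
  · simp [key.mp h]
  · rw [key] at h
    exact iff_of_false (by norm_num) h

lemma rps_eq_one_or (k r : ℕ) (a : ℤ) : rps k r a = 1 ∨ rps k r a = -1 := by
  unfold rps; split_ifs <;> simp

lemma sign_mul_iff {x y : ℤ} (hx : x = 1 ∨ x = -1) (hy : y = 1 ∨ y = -1) :
    x * y = 1 ↔ (x = 1 ↔ y = 1) := by
  rcases hx with h | h <;> rcases hy with h' | h' <;> subst h <;> subst h' <;> norm_num

lemma rpsN_pq (k p q : ℕ) (hp : p.Prime) (hq : q.Prime) (a : ℤ) :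
    rpsN k (p * q) a = rps k p a * rps k q a := by
  unfold rpsN
  have hperm := Nat.perm_primeFactorsList_mul hp.pos.ne' hq.pos.ne'
  rw [(hperm.map _).prod_eq, Nat.primeFactorsList_prime hp, Nat.primeFactorsList_prime hq]
  simp

lemma sq_crt (p q : ℕ) (hp : p.Prime) (hq : q.Prime) (hpq : p ≠ q) (a : ℤ) :
    (∃ x : ℤ, x ^ 2 ≡ a [ZMOD ((p : ℤ) * q)]) ↔
      (∃ y : ZMod p, y ^ 2 = (a : ZMod p)) ∧ (∃ y : ZMod q, y ^ 2 = (a : ZMod q)) := by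
  have hco : Nat.Coprime p q := (Nat.coprime_primes hp hq).mpr hpq
  have hcast : ((p : ℤ) * q) = ((p * q : ℕ) : ℤ) := by push_cast; ring
  have hmain : (∃ x : ℤ, x ^ 2 ≡ a [ZMOD ((p : ℤ) * q)]) ↔
      ∃ z : ZMod (p * q), z ^ 2 = (a : ZMod (p * q)) := by
    rw [hcast]
    constructor
    · rintro ⟨x, hx⟩
      refine ⟨(x : ZMod (p * q)), ?_⟩
      have := (ZMod.intCast_eq_intCast_iff _ _ _).mpr hx
      push_cast at this
      exact this
    · rintro ⟨z, hz⟩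
      refine ⟨(ZMod.cast z : ℤ), (ZMod.intCast_eq_intCast_iff _ _ _).mp ?_⟩
      push_cast [ZMod.intCast_zmod_cast]
      exact hz
  rw [hmain]
  set e := ZMod.chineseRemainder hco with he
  constructor
  · rintro ⟨z, hz⟩
    constructor
    · refine ⟨(e z).1, ?_⟩
      have : (e (z ^ 2)).1 = (e ((a : ℤ) : ZMod (p * q))).1 := by rw [hz]
      simpa [map_pow, map_intCast] using this
    · refine ⟨(e z).2, ?_⟩
      have : (e (z ^ 2)).2 = (e ((a : ℤ) : ZMod (p * q))).2 := by rw [hz]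
      simpa [map_pow, map_intCast] using this
  · rintro ⟨⟨y1, hy1⟩, ⟨y2, hy2⟩⟩
    refine ⟨e.symm (y1, y2), ?_⟩
    apply e.injective
    rw [map_pow, RingEquiv.apply_symm_apply, map_intCast]
    ext
    · simpa using hy1
    · simpa using hy2

lemma fourth_three_mod (r : ℕ) [Fact r.Prime] (hr : r % 4 = 3) (b : ZMod r) (hb : b ≠ 0) :
    ∃ y : ZMod r, y ^ 4 = b ^ 2 := by
  by_cases h : IsSquare b
  · obtain ⟨c, hc⟩ := h
    exact ⟨c, by rw [hc]; ring⟩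
  · have hneg1 : ¬IsSquare (-1 : ZMod r) := by
      rw [ZMod.exists_sq_eq_neg_one_iff]
      simp [hr]
    have hchar : ringChar (ZMod r) ≠ 2 := by
      rw [ZMod.ringChar_zmod_n]
      omega
    have h1 : quadraticChar (ZMod r) b = -1 := quadraticChar_neg_one_iff_not_isSquare.mpr h
    have h2 : quadraticChar (ZMod r) (-1) = -1 := quadraticChar_neg_one_iff_not_isSquare.mpr hneg1
    have h3 : quadraticChar (ZMod r) (-b) = 1 := by
      have : (-b) = (-1) * b := by ring
      rw [this, map_mul, h1, h2]; norm_num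
    have h4 : IsSquare (-b) :=
      (quadraticChar_one_iff_isSquare (by simpa using hb)).mp h3
    obtain ⟨c, hc⟩ := h4
    refine ⟨c, ?_⟩
    have : c * c = -b := hc.symm
    calc c ^ 4 = (c * c) ^ 2 := by ring
    _ = (-b) ^ 2 := by rw [this]
    _ = b ^ 2 := by ring

lemma fourth_one_mod (r : ℕ) [Fact r.Prime] (hr : r % 4 = 1) (b : ZMod r) :
    (∃ y : ZMod r, y ^ 4 = b ^ 2) ↔ ∃ y : ZMod r, y ^ 2 = b := by
  have hneg1 : IsSquare (-1 : ZMod r) := by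
    rw [ZMod.exists_sq_eq_neg_one_iff]
    omega
  obtain ⟨i, hi⟩ := hneg1
  constructor
  · rintro ⟨y, hy⟩
    have hfac : (y ^ 2 - b) * (y ^ 2 + b) = 0 := by linear_combination hy
    rcases mul_eq_zero.mp hfac with h | h
    · exact ⟨y, sub_eq_zero.mp h⟩
    · refine ⟨i * y, ?_⟩
      have hb : y ^ 2 = -b := by linear_combination h
      calc (i * y) ^ 2 = (i * i) * y ^ 2 := by ring
      _ = (-1) * (-b) := by rw [← hi, hb]
      _ = b := by ring
  · rintro ⟨y, hy⟩
    exact ⟨y, by rw [← hy]; ring⟩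

lemma core (p q : ℕ) [Fact p.Prime] [Fact q.Prime]
    (hp4 : p % 4 = 3) (hq4 : q % 4 = 1)
    (a : ℤ) (hap : (a : ZMod p) ≠ 0) (haq : (a : ZMod q) ≠ 0)
    (hjac : rps 1 p a * rps 1 q a = 1) :
    ((∃ y : ZMod p, y ^ 2 = (a : ZMod p)) ∧ (∃ y : ZMod q, y ^ 2 = (a : ZMod q))) ↔
      rps 2 p (a ^ 2) * rps 2 q (a ^ 2) = 1 := by
  have hcp : ((a ^ 2 : ℤ) : ZMod p) = (a : ZMod p) ^ 2 := by push_cast; ring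
  have hcq : ((a ^ 2 : ℤ) : ZMod q) = (a : ZMod q) ^ 2 := by push_cast; ring
  have hC : rps 2 p (a ^ 2) = 1 := by
    rw [rps_eq_one_iff, show (2 : ℕ) ^ 2 = 4 from rfl, hcp]
    exact fourth_three_mod p hp4 (a : ZMod p) hap
  have hD : rps 2 q (a ^ 2) = 1 ↔ ∃ y : ZMod q, y ^ 2 = (a : ZMod q) := by
    rw [rps_eq_one_iff, show (2 : ℕ) ^ 2 = 4 from rfl, hcq]
    exact fourth_one_mod q hq4 (a : ZMod q)
  have hAB : (rps 1 p a = 1) ↔ (rps 1 q a = 1) :=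
    (sign_mul_iff (rps_eq_one_or 1 p a) (rps_eq_one_or 1 q a)).mp hjac
  have hA : rps 1 p a = 1 ↔ ∃ y : ZMod p, y ^ 2 = (a : ZMod p) := by
    rw [rps_eq_one_iff, show (2 : ℕ) ^ 1 = 2 from rfl]
  have hB : rps 1 q a = 1 ↔ ∃ y : ZMod q, y ^ 2 = (a : ZMod q) := by
    rw [rps_eq_one_iff, show (2 : ℕ) ^ 1 = 2 from rfl]
  rw [hC, one_mul, hD]
  constructor
  · exact fun h => h.2
  · intro hBq
    exact ⟨hA.mp (hAB.mpr (hB.mpr hBq)), hBq⟩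

theorem statement17 (p q : ℕ) (hp : p.Prime) (hq : q.Prime) (hpq : p ≠ q)
    (hN : p * q ≡ 3 [MOD 4])
    (a : ℤ) (ha : Int.gcd a ((p : ℤ) * q) = 1)
    (hjac : rpsN 1 (p * q) a = 1) :
    (∃ x : ℤ, x ^ 2 ≡ a [ZMOD ((p : ℤ) * q)]) ↔ rpsN 2 (p * q) (a ^ 2) = 1 := by
  haveI : Fact p.Prime := ⟨hp⟩
  haveI : Fact q.Prime := ⟨hq⟩
  -- mod 4 analysis
  have hN' : (p * q) % 4 = 3 := by
    have := hN; unfold Nat.ModEq at this; omega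
  have hodd : (p * q) % 2 = 1 := by omega
  have hpq2 : p % 2 * (q % 2) % 2 = 1 := by rw [← Nat.mul_mod]; exact hodd
  have hpqodd : p % 2 = 1 ∧ q % 2 = 1 := by
    rcases Nat.mod_two_eq_zero_or_one p with h | h <;> rcases Nat.mod_two_eq_zero_or_one q with h' | h' <;>
      simp only [h, h'] at hpq2 <;> omega
  have hp4 : p % 4 = 1 ∨ p % 4 = 3 := by omega
  have hq4 : q % 4 = 1 ∨ q % 4 = 3 := by omega
  have hmul4 : (p % 4 * (q % 4)) % 4 = 3 := by rw [← Nat.mul_mod]; exact hN'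
  -- nonzero conditions
  have hco : IsCoprime a ((p : ℤ) * q) := Int.isCoprime_iff_gcd_eq_one.mpr ha
  have hap : (a : ZMod p) ≠ 0 := by
    rw [Ne, ZMod.intCast_zmod_eq_zero_iff_dvd]
    intro hd
    have hu : IsUnit (p : ℤ) := hco.isUnit_of_dvd' hd ⟨q, rfl⟩
    rw [Int.isUnit_iff] at hu
    have := hp.one_lt
    rcases hu with h | h <;> omega
  have haq : (a : ZMod q) ≠ 0 := by
    rw [Ne, ZMod.intCast_zmod_eq_zero_iff_dvd]
    intro hd
    have hu : IsUnit (q : ℤ) := hco.isUnit_of_dvd' hd ⟨p, mul_comm _ _⟩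
    rw [Int.isUnit_iff] at hu
    have := hq.one_lt
    rcases hu with h | h <;> omega
  have hjac' : rps 1 p a * rps 1 q a = 1 := by rwa [rpsN_pq 1 p q hp hq] at hjac
  rw [sq_crt p q hp hq hpq, rpsN_pq 2 p q hp hq]
  rcases hp4 with h1 | h1 <;> rcases hq4 with h2 | h2
  · rw [h1, h2] at hmul4; norm_num at hmul4
  · rw [and_comm, mul_comm]
    exact core q p h2 h1 a haq hap (by rw [mul_comm]; exact hjac')
  · exact core p q h1 h2 a hap haq hjac'
  · rw [h1, h2] at hmul4; norm_num at hmul4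
end

section
/- Let n = pqr with p, q, r distinct primes such that p ≡ 3 (mod 4) and q ≡ r ≡ 1 (mod 4), and let m ∈ ℕ be coprime to n with (m|p)_2 = (m|q)_2 = (m|r)_2 = 1. Then the sign of the permutation of Z*_{n,2} given by x ↦ mx (mod n) equals 1, and the sign of the permutation of Z_{n,2} given by x ↦ mx (mod n) equals 1. -/
/- `Z*_{n,2^k}`: the set of `2^k`-th power residues among the units of `ℤ/nℤ`. -/
open Classical in
noncomputable def QRunits (n k : ℕ) [NeZero n] : Finset ((ZMod n)ˣ) :=
  Finset.univ.filter fun r => ∃ x : ℤ, (x : ZMod n) ^ (2 ^ k) = (r : ZMod n)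

/- `Z_{n,2^k}`: the set of `2^k`-th power residues in `ℤ/nℤ`. -/
open Classical in
noncomputable def QRset (n k : ℕ) [NeZero n] : Finset (ZMod n) :=
  Finset.univ.filter fun r => ∃ x : ℤ, (x : ZMod n) ^ (2 ^ k) = r


open Equiv Equiv.Perm

noncomputable instance instDecIsSquare {M : Type*} [Monoid M] : DecidablePred (IsSquare : M → Prop) :=
  fun _ => Classical.propDecidable _

section Aux

variable {M N : Type*}

lemma aux_isSquare_units [CommMonoid M] (u : Mˣ) : IsSquare (u : M) ↔ IsSquare u := by
  constructor
  · rintro ⟨y, hy⟩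
    have hyu : IsUnit y := isUnit_of_mul_isUnit_left (show IsUnit (y*y) by rw [← hy]; exact u.isUnit)
    exact ⟨hyu.unit, Units.ext (by simp [hy])⟩
  · rintro ⟨y, rfl⟩; exact ⟨(y : M), by simp⟩

lemma aux_isSquare_prod [Monoid M] [Monoid N] (z : M × N) :
    IsSquare z ↔ IsSquare z.1 ∧ IsSquare z.2 := by
  constructor
  · rintro ⟨y, rfl⟩; exact ⟨⟨y.1, rfl⟩, ⟨y.2, rfl⟩⟩
  · rintro ⟨⟨a, ha⟩, ⟨b, hb⟩⟩
    exact ⟨(a, b), by rw [Prod.ext_iff]; exact ⟨ha, hb⟩⟩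

lemma aux_isSquare_map [Monoid M] [Monoid N] (e : M ≃* N) (a : M) :
    IsSquare (e a) ↔ IsSquare a := by
  constructor
  · intro h
    have := h.map e.symm.toMonoidHom
    simpa using this
  · intro h; exact h.map e.toMonoidHom

end Aux

section Perm

variable {M N : Type*}

noncomputable def sqMulPerm [CommMonoid M] [Fintype M] (c : M) (hc : IsUnit c) (hs : IsSquare c) :
    Equiv.Perm {x : M // IsSquare x} :=
  Equiv.ofBijective (fun x => ⟨c * (x : M), hs.mul x.2⟩)
    (Finite.injective_iff_bijective.mp fun x y hxy => Subtype.ext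
      (hc.mul_left_cancel (congrArg Subtype.val hxy)))

lemma sqMulPerm_apply [CommMonoid M] [Fintype M] (c : M) (hc : IsUnit c) (hs : IsSquare c)
    (x : {x : M // IsSquare x}) : ((sqMulPerm c hc hs x : M)) = c * x := rfl

lemma sqMulPerm_pow_apply [CommMonoid M] [Fintype M] (c : M) (hc : IsUnit c) (hs : IsSquare c)
    (k : ℕ) : ∀ x : {x : M // IsSquare x}, (((sqMulPerm c hc hs ^ k) x : M)) = c ^ k * x := by
  induction k with
  | zero => intro x; simp
  | succ k ih =>
    intro x
    rw [pow_succ, Equiv.Perm.mul_apply, ih, sqMulPerm_apply, pow_succ, mul_assoc]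

lemma sign_sqMulPerm_of_odd_pow [CommMonoid M] [Fintype M] [DecidableEq M] (c : M) (hc : IsUnit c)
    (hs : IsSquare c) (k : ℕ) (hk : Odd k) (hck : c ^ k = 1) :
    Equiv.Perm.sign (sqMulPerm c hc hs) = 1 := by
  have h1 : (sqMulPerm c hc hs) ^ k = 1 := by
    apply Equiv.ext
    intro x
    apply Subtype.ext
    rw [Equiv.Perm.one_apply, sqMulPerm_pow_apply, hck, one_mul]
  have h2 : (Equiv.Perm.sign (sqMulPerm c hc hs)) ^ k = 1 := by
    rw [← map_pow, h1, map_one]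
  rcases Int.units_eq_one_or (Equiv.Perm.sign (sqMulPerm c hc hs)) with h | h
  · exact h
  · rw [h, Odd.neg_one_pow hk] at h2
    exact absurd h2 (by decide)

noncomputable def sqCongr [Monoid M] [Monoid N] (e : M ≃* N) :
    {x : M // IsSquare x} ≃ {y : N // IsSquare y} :=
  e.toEquiv.subtypeEquiv fun a => (aux_isSquare_map e a).symm

noncomputable def sqProd [Monoid M] [Monoid N] :
    {z : M × N // IsSquare z} ≃ {x : M // IsSquare x} × {y : N // IsSquare y} :=
  (Equiv.subtypeEquivRight fun z => aux_isSquare_prod z).trans Equiv.subtypeProdEquivProd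

lemma card_sq_congr [Monoid M] [Monoid N] (e : M ≃* N) :
    Nat.card {y : N // IsSquare y} = Nat.card {x : M // IsSquare x} :=
  Nat.card_congr (sqCongr e).symm

lemma card_sq_prod [Monoid M] [Monoid N] :
    Nat.card {z : M × N // IsSquare z} =
      Nat.card {x : M // IsSquare x} * Nat.card {y : N // IsSquare y} := by
  rw [Nat.card_congr sqProd, Nat.card_prod]

lemma sign_sqMulPerm_mulEquiv [CommMonoid M] [CommMonoid N] [Fintype M] [Fintype N] [DecidableEq M] [DecidableEq N]
    (e : M ≃* N) (c : M) (hc : IsUnit c) (hs : IsSquare c) (hc' : IsUnit (e c))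
    (hs' : IsSquare (e c)) :
    Equiv.Perm.sign (sqMulPerm (e c) hc' hs') = Equiv.Perm.sign (sqMulPerm c hc hs) := by
  refine Equiv.Perm.sign_eq_sign_of_equiv _ _ (sqCongr e).symm ?_
  intro x
  apply Subtype.ext
  simp [sqCongr, sqMulPerm_apply, Equiv.subtypeEquiv, map_mul]

lemma sign_prodCongr' {α β : Type*} [DecidableEq α] [DecidableEq β] [Fintype α] [Fintype β]
    (σ : Equiv.Perm α) (τ : Equiv.Perm β) :
    Equiv.Perm.sign (Equiv.prodCongr σ τ) =
      Equiv.Perm.sign σ ^ Fintype.card β * Equiv.Perm.sign τ ^ Fintype.card α := by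
  have h : Equiv.prodCongr σ τ =
      (Equiv.prodCongrLeft fun _ : β => σ) * (Equiv.prodCongrRight fun _ : α => τ) := by
    apply Equiv.ext
    rintro ⟨a, b⟩
    simp [Equiv.prodCongrLeft, Equiv.prodCongrRight, Equiv.Perm.mul_apply]
  rw [h, map_mul, Equiv.Perm.sign_prodCongrLeft, Equiv.Perm.sign_prodCongrRight]
  simp [Finset.prod_const, Finset.card_univ]

lemma sign_sqMulPerm_prod [CommMonoid M] [CommMonoid N] [Fintype M] [Fintype N] [DecidableEq M] [DecidableEq N]
    (cd : M × N) (hc : IsUnit cd) (hs : IsSquare cd)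
    (hc1 : IsUnit cd.1) (hs1 : IsSquare cd.1) (hc2 : IsUnit cd.2) (hs2 : IsSquare cd.2) :
    Equiv.Perm.sign (sqMulPerm cd hc hs) =
      Equiv.Perm.sign (sqMulPerm cd.1 hc1 hs1) ^ Nat.card {y : N // IsSquare y} *
        Equiv.Perm.sign (sqMulPerm cd.2 hc2 hs2) ^ Nat.card {x : M // IsSquare x} := by
  rw [Nat.card_eq_fintype_card, Nat.card_eq_fintype_card, ← sign_prodCongr']
  refine Equiv.Perm.sign_eq_sign_of_equiv _ _ sqProd ?_
  rintro ⟨⟨z1, z2⟩, hz⟩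
  simp only [sqProd, sqMulPerm_apply, Equiv.trans_apply, Equiv.subtypeEquivRight,
    Equiv.subtypeProdEquivProd, Equiv.coe_fn_mk, Equiv.prodCongr_apply, Prod.map]
  rfl

end Perm

section Parity

lemma even_card_invol {α : Type*} [DecidableEq α] (s : Finset α) (f : α → α)
    (hmem : ∀ x ∈ s, f x ∈ s) (hinv : ∀ x ∈ s, f (f x) = x) (hne : ∀ x ∈ s, f x ≠ x) :
    Even s.card := by
  induction s using Finset.strongInduction with
  | _ s ih =>
    rcases s.eq_empty_or_nonempty with rfl | ⟨x, hx⟩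
    · simp
    · have hfx : f x ∈ s := hmem x hx
      have hxx : f x ≠ x := hne x hx
      set t := (s.erase x).erase (f x) with ht
      have htss : t ⊂ s := by
        refine Finset.ssubset_of_subset_of_ssubset ?_ (Finset.erase_ssubset hx)
        exact Finset.erase_subset _ _
      have htmem : ∀ y ∈ t, y ∈ s ∧ y ≠ x ∧ y ≠ f x := by
        intro y hy
        rw [ht, Finset.mem_erase, Finset.mem_erase] at hy
        exact ⟨hy.2.2, hy.2.1, hy.1⟩
      have hmem' : ∀ y ∈ t, f y ∈ t := by
        intro y hy
        obtain ⟨hys, hyx, hyfx⟩ := htmem y hy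
        rw [ht, Finset.mem_erase, Finset.mem_erase]
        refine ⟨?_, ?_, hmem y hys⟩
        · intro h; exact hyx (by rw [← hinv y hys, h, hinv x hx])
        · intro h; exact hyfx (by rw [← hinv y hys, h])
      have heven : Even t.card :=
        ih t htss hmem' (fun y hy => hinv y (htmem y hy).1) (fun y hy => hne y (htmem y hy).1)
      have hc1 : ((s.erase x).erase (f x)).card + 1 = (s.erase x).card :=
        Finset.card_erase_add_one (Finset.mem_erase.mpr ⟨hxx, hfx⟩)
      have hc2 : (s.erase x).card + 1 = s.card := Finset.card_erase_add_one hx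
      have : s.card = t.card + 2 := by rw [ht]; omega
      rw [this]
      exact heven.add (Even.add_self 1)

lemma even_card_sq_zmod (p : ℕ) [NeZero p] (hp : p.Prime) (hp4 : p % 4 = 3) :
    Even (Nat.card {x : ZMod p // IsSquare x}) := by
  haveI : Fact p.Prime := ⟨hp⟩
  rw [Nat.card_eq_fintype_card, Fintype.card_subtype]
  set s : Finset (ZMod p) := Finset.univ.filter (fun x => IsSquare x) with hs
  have h0 : (0 : ZMod p) ∈ s := by
    simp only [hs, Finset.mem_filter, Finset.mem_univ, true_and]
    exact ⟨0, by ring⟩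
  have h1 : (1 : ZMod p) ∈ s := by
    simp only [hs, Finset.mem_filter, Finset.mem_univ, true_and]
    exact ⟨1, by ring⟩
  have h01 : (0 : ZMod p) ≠ 1 := by
    intro h; exact zero_ne_one h
  set t := (s.erase 0).erase 1 with htdef
  have ht : ∀ y ∈ t, IsSquare y ∧ y ≠ 0 ∧ y ≠ 1 := by
    intro y hy
    rw [htdef, Finset.mem_erase, Finset.mem_erase, hs, Finset.mem_filter] at hy
    exact ⟨hy.2.2.2, hy.2.1, hy.1⟩
  have heven : Even t.card := by
    refine even_card_invol t Inv.inv ?_ ?_ ?_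
    · intro y hy
      obtain ⟨⟨z, hz⟩, hy0, hy1⟩ := ht y hy
      rw [htdef, Finset.mem_erase, Finset.mem_erase, hs, Finset.mem_filter]
      show y⁻¹ ≠ 1 ∧ y⁻¹ ≠ 0 ∧ y⁻¹ ∈ Finset.univ ∧ IsSquare y⁻¹
      refine ⟨by simpa using hy1, inv_ne_zero hy0, Finset.mem_univ _, ⟨z⁻¹, by rw [hz, mul_inv]⟩⟩
    · intro y _; exact inv_inv y
    · intro y hy hinv
      obtain ⟨hysq, hy0, hy1⟩ := ht y hy
      replace hinv : y⁻¹ = y := hinv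
      have : y * y = 1 := by
        nth_rewrite 1 [← hinv]
        exact inv_mul_cancel₀ hy0
      rcases mul_self_eq_one_iff.mp this with h | h
      · exact hy1 h
      · rw [h] at hysq
        exact (ZMod.exists_sq_eq_neg_one_iff.mp hysq) hp4
  have hc1 : ((s.erase 0).erase 1).card + 1 = (s.erase 0).card :=
    Finset.card_erase_add_one (Finset.mem_erase.mpr ⟨h01.symm, h1⟩)
  have hc2 : (s.erase 0).card + 1 = s.card := Finset.card_erase_add_one h0
  have : s.card = t.card + 2 := by rw [htdef]; omega
  rw [this]
  exact heven.add (Even.add_self 1)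

lemma even_card_sq_units_zmod (q : ℕ) [NeZero q] (hq : q.Prime) (hq4 : q % 4 = 1) :
    Even (Nat.card {u : (ZMod q)ˣ // IsSquare u}) := by
  haveI : Fact q.Prime := ⟨hq⟩
  rw [Nat.card_eq_fintype_card, Fintype.card_subtype]
  have hqodd : ¬ q ∣ 2 := by
    intro h
    have h2q : q ≤ 2 := Nat.le_of_dvd (by norm_num) h
    have := hq.two_le
    omega
  have h2 : (2 : ZMod q) ≠ 0 := by
    intro hz
    have : ((2 : ℕ) : ZMod q) = 0 := by push_cast; exact hz
    rw [ZMod.natCast_eq_zero_iff] at this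
    exact hqodd this
  have hneg1 : IsSquare (-1 : (ZMod q)ˣ) := by
    rw [← aux_isSquare_units]
    simp only [Units.val_neg, Units.val_one]
    exact ZMod.exists_sq_eq_neg_one_iff.mpr (by omega)
  refine even_card_invol _ Neg.neg ?_ ?_ ?_
  · intro u hu
    rw [Finset.mem_filter] at hu ⊢
    refine ⟨Finset.mem_univ _, ?_⟩
    show IsSquare (-u)
    rw [show -u = -1 * u by rw [neg_one_mul]]
    exact hneg1.mul hu.2
  · intro u _; exact neg_neg u
  · intro u _ h
    replace h : -u = u := h
    have hval : (-(u : ZMod q)) = (u : ZMod q) := by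
      rw [← Units.val_neg, h]
    have hadd : (u : ZMod q) + (u : ZMod q) = 0 := by
      nth_rewrite 1 [← hval]
      exact neg_add_cancel _
    have : (2 : ZMod q) * (u : ZMod q) = 0 := by
      rw [two_mul]; exact hadd
    rcases mul_eq_zero.mp this with h' | h'
    · exact h2 h'
    · exact Units.ne_zero u h'

end Parity

section Glue

lemma units_pow_even (u : ℤˣ) {k : ℕ} (h : Even k) : u ^ k = 1 := by
  obtain ⟨t, rfl⟩ := h
  rw [← two_mul, pow_mul, Int.units_sq, one_pow]

lemma exists_perm_of_sign {M : Type*} [CommMonoid M] [Fintype M] [DecidableEq M] (c : M)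
    (hc : IsUnit c) (hs : IsSquare c) (S : Finset M) (hS : ∀ x, x ∈ S ↔ IsSquare x)
    (hsign : Equiv.Perm.sign (sqMulPerm c hc hs) = 1) :
    ∃ σ : Equiv.Perm {x : M // x ∈ S}, (∀ x : {x : M // x ∈ S}, ((σ x : M)) = c * x) ∧
      (Equiv.Perm.sign σ : ℤ) = 1 := by
  let E : {x : M // x ∈ S} ≃ {x : M // IsSquare x} := Equiv.subtypeEquivRight hS
  refine ⟨E.permCongr.symm (sqMulPerm c hc hs), ?_, ?_⟩
  · intro x
    show ((E.symm ((sqMulPerm c hc hs) (E x))) : M) = c * x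
    have h1 : ∀ y : {x : M // IsSquare x}, ((E.symm y : M)) = y := fun y => rfl
    have h2 : ∀ y : {x : M // x ∈ S}, ((E y : M)) = y := fun y => rfl
    rw [h1, sqMulPerm_apply, h2]
  · have : Equiv.Perm.sign (E.permCongr.symm (sqMulPerm c hc hs)) = 1 := by
      rw [Equiv.permCongr_symm, Equiv.Perm.sign_permCongr, hsign]
    rw [this]
    rfl

end Glue

section ZModGlue

lemma sign_eq_of_instances {α : Type*} (i1 i2 : DecidableEq α) (f1 f2 : Fintype α)
    (σ : Equiv.Perm α) :
    ((@Equiv.Perm.sign α i1 f1 σ : ℤˣ) : ℤ) = ((@Equiv.Perm.sign α i2 f2 σ : ℤˣ) : ℤ) := by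
  have h1 : i1 = i2 := by
    funext a b
    exact Subsingleton.elim _ _
  subst h1
  have h2 : f1 = f2 := Subsingleton.elim _ _
  subst h2
  rfl

lemma sqMulPerm_congr {M : Type*} [CommMonoid M] [Fintype M] [DecidableEq M] {c d : M} (h : c = d)
    (hc : IsUnit c) (hs : IsSquare c) (hc' : IsUnit d) (hs' : IsSquare d) :
    Equiv.Perm.sign (sqMulPerm c hc hs) = Equiv.Perm.sign (sqMulPerm d hc' hs') := by
  subst h
  rfl

lemma isSquare_of_rps (p : ℕ) [NeZero p] (m : ℕ) (h : rps 1 p (m : ℤ) = 1) :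
    IsSquare ((m : ℕ) : ZMod p) := by
  rw [rps] at h
  by_cases hc : ∃ x : ℤ, x ^ (2 ^ 1) ≡ (m : ℤ) [ZMOD (p : ℤ)]
  · obtain ⟨x, hx⟩ := hc
    have hx' : ((x ^ (2 ^ 1) : ℤ) : ZMod p) = ((m : ℤ) : ZMod p) :=
      (ZMod.intCast_eq_intCast_iff _ _ _).mpr hx
    push_cast at hx'
    exact ⟨(x : ZMod p), by rw [← hx']; ring⟩
  · rw [if_neg hc] at h
    norm_num at h

lemma mem_QRset_iff (n : ℕ) [NeZero n] (x : ZMod n) : x ∈ QRset n 1 ↔ IsSquare x := by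
  classical
  rw [QRset]
  simp only [Finset.mem_filter, Finset.mem_univ, true_and]
  constructor
  · rintro ⟨y, hy⟩
    exact ⟨(y : ZMod n), by rw [← hy]; ring⟩
  · rintro ⟨w, hw⟩
    obtain ⟨z, rfl⟩ := ZMod.intCast_surjective w
    exact ⟨z, by rw [hw]; ring⟩

lemma mem_QRunits_iff (n : ℕ) [NeZero n] (u : (ZMod n)ˣ) :
    u ∈ QRunits n 1 ↔ IsSquare u := by
  classical
  rw [QRunits]
  simp only [Finset.mem_filter, Finset.mem_univ, true_and]
  rw [← aux_isSquare_units]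
  constructor
  · rintro ⟨y, hy⟩
    exact ⟨(y : ZMod n), by rw [← hy]; ring⟩
  · rintro ⟨w, hw⟩
    obtain ⟨z, rfl⟩ := ZMod.intCast_surjective w
    exact ⟨z, by rw [hw]; ring⟩

end ZModGlue

set_option maxHeartbeats 2000000 in
theorem statement19 (p q r : ℕ) (hp : p.Prime) (hq : q.Prime) (hr : r.Prime)
    [NeZero p] [NeZero q] [NeZero r]
    (hpq : p ≠ q) (hpr : p ≠ r) (hqr : q ≠ r)
    (hp4 : p ≡ 3 [MOD 4]) (hq4 : q ≡ 1 [MOD 4]) (hr4 : r ≡ 1 [MOD 4])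
    (m : ℕ) (hm : Nat.Coprime m (p * q * r))
    (hmp : rps 1 p (m : ℤ) = 1) (hmq : rps 1 q (m : ℤ) = 1) (hmr : rps 1 r (m : ℤ) = 1) :
    (∃ σ : Equiv.Perm (QRunits (p * q * r) 1),
      (∀ x : QRunits (p * q * r) 1,
        ((σ x : (ZMod (p * q * r))ˣ) : ZMod (p * q * r)) =
          (m : ZMod (p * q * r)) * ((x : (ZMod (p * q * r))ˣ) : ZMod (p * q * r))) ∧
      (Equiv.Perm.sign σ : ℤ) = 1) ∧
    (∃ τ : Equiv.Perm (QRset (p * q * r) 1),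
      (∀ x : QRset (p * q * r) 1,
        ((τ x : ZMod (p * q * r))) = (m : ZMod (p * q * r)) * (x : ZMod (p * q * r))) ∧
      (Equiv.Perm.sign τ : ℤ) = 1) := by
  haveI fpp : Fact p.Prime := ⟨hp⟩
  haveI fqq : Fact q.Prime := ⟨hq⟩
  haveI frr : Fact r.Prime := ⟨hr⟩
  haveI : NeZero (p * q) := ⟨Nat.mul_ne_zero (NeZero.ne p) (NeZero.ne q)⟩
  haveI : NeZero (p * q * r) :=
    ⟨Nat.mul_ne_zero (Nat.mul_ne_zero (NeZero.ne p) (NeZero.ne q)) (NeZero.ne r)⟩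
  have hp4' : p % 4 = 3 := by simpa [Nat.ModEq] using hp4
  have hq4' : q % 4 = 1 := by simpa [Nat.ModEq] using hq4
  have hr4' : r % 4 = 1 := by simpa [Nat.ModEq] using hr4
  have cpq : Nat.Coprime p q := (Nat.coprime_primes hp hq).mpr hpq
  have cpq_r : Nat.Coprime (p * q) r :=
    Nat.Coprime.mul ((Nat.coprime_primes hp hr).mpr hpr) ((Nat.coprime_primes hq hr).mpr hqr)
  have hm_p : Nat.Coprime m p := hm.coprime_dvd_right ⟨q * r, by ring⟩
  have hm_q : Nat.Coprime m q := hm.coprime_dvd_right ⟨p * r, by ring⟩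
  have hm_r : Nat.Coprime m r := hm.coprime_dvd_right ⟨p * q, by ring⟩
  have hm_pq : Nat.Coprime m (p * q) := hm.coprime_dvd_right ⟨r, rfl⟩
  -- basic facts mod the individual primes
  have sqp : IsSquare ((m : ℕ) : ZMod p) := isSquare_of_rps p m hmp
  have sqq : IsSquare ((m : ℕ) : ZMod q) := isSquare_of_rps q m hmq
  have sqr : IsSquare ((m : ℕ) : ZMod r) := isSquare_of_rps r m hmr
  have unp : IsUnit ((m : ℕ) : ZMod p) := (ZMod.isUnit_iff_coprime m p).mpr hm_p
  have unq : IsUnit ((m : ℕ) : ZMod q) := (ZMod.isUnit_iff_coprime m q).mpr hm_q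
  have unr : IsUnit ((m : ℕ) : ZMod r) := (ZMod.isUnit_iff_coprime m r).mpr hm_r
  have unpq : IsUnit ((m : ℕ) : ZMod (p * q)) := (ZMod.isUnit_iff_coprime m (p * q)).mpr hm_pq
  have unn : IsUnit ((m : ℕ) : ZMod (p * q * r)) := (ZMod.isUnit_iff_coprime m (p * q * r)).mpr hm
  -- CRT isomorphisms
  let φ1 : ZMod (p * q * r) ≃+* ZMod (p * q) × ZMod r := ZMod.chineseRemainder cpq_r
  let φ2 : ZMod (p * q) ≃+* ZMod p × ZMod q := ZMod.chineseRemainder cpq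
  have hφ1m : φ1.toMulEquiv ((m : ℕ) : ZMod (p * q * r)) =
      (((m : ℕ) : ZMod (p * q)), ((m : ℕ) : ZMod r)) := by
    show φ1 ((m : ℕ) : ZMod (p * q * r)) = _
    rw [map_natCast φ1 m]
    exact Prod.ext (Prod.fst_natCast m) (Prod.snd_natCast m)
  have hφ2m : φ2.toMulEquiv ((m : ℕ) : ZMod (p * q)) =
      (((m : ℕ) : ZMod p), ((m : ℕ) : ZMod q)) := by
    show φ2 ((m : ℕ) : ZMod (p * q)) = _
    rw [map_natCast φ2 m]
    exact Prod.ext (Prod.fst_natCast m) (Prod.snd_natCast m)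
  have sqpq : IsSquare ((m : ℕ) : ZMod (p * q)) := by
    rw [← aux_isSquare_map φ2.toMulEquiv, hφ2m, aux_isSquare_prod]
    exact ⟨sqp, sqq⟩
  have sqn : IsSquare ((m : ℕ) : ZMod (p * q * r)) := by
    rw [← aux_isSquare_map φ1.toMulEquiv, hφ1m, aux_isSquare_prod]
    exact ⟨sqpq, sqr⟩
  -- parity facts
  have evp : Even (Nat.card {x : ZMod p // IsSquare x}) := even_card_sq_zmod p hp hp4'
  have evuq : Even (Nat.card {u : (ZMod q)ˣ // IsSquare u}) :=
    even_card_sq_units_zmod q hq hq4'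
  have evur : Even (Nat.card {u : (ZMod r)ˣ // IsSquare u}) :=
    even_card_sq_units_zmod r hr hr4'
  have evpq : Even (Nat.card {x : ZMod (p * q) // IsSquare x}) := by
    rw [← card_sq_congr φ2.toMulEquiv, card_sq_prod]
    exact evp.mul_right _
  -- Euler: sign of multiplication on squares mod p is 1
  have sp : Equiv.Perm.sign (sqMulPerm ((m : ℕ) : ZMod p) unp sqp) = 1 := by
    refine sign_sqMulPerm_of_odd_pow _ _ _ (p / 2) ?_ ?_
    · rw [Nat.odd_iff]; omega
    · exact (ZMod.euler_criterion p unp.ne_zero).mp sqp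
  -- sign of multiplication on squares mod p*q is 1
  have spq : Equiv.Perm.sign (sqMulPerm ((m : ℕ) : ZMod (p * q)) unpq sqpq) = 1 := by
    calc Equiv.Perm.sign (sqMulPerm ((m : ℕ) : ZMod (p * q)) unpq sqpq)
        = Equiv.Perm.sign (sqMulPerm (φ2.toMulEquiv ((m : ℕ) : ZMod (p * q)))
            (unpq.map φ2.toMulEquiv.toMonoidHom) (sqpq.map φ2.toMulEquiv.toMonoidHom)) :=
          (sign_sqMulPerm_mulEquiv φ2.toMulEquiv _ unpq sqpq _ _).symm
      _ = Equiv.Perm.sign (sqMulPerm ((((m : ℕ) : ZMod p), ((m : ℕ) : ZMod q)))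
            (by rw [← hφ2m]; exact unpq.map φ2.toMulEquiv.toMonoidHom)
            (by rw [← hφ2m]; exact sqpq.map φ2.toMulEquiv.toMonoidHom)) :=
          sqMulPerm_congr hφ2m _ _ _ _
      _ = Equiv.Perm.sign (sqMulPerm ((m : ℕ) : ZMod p) unp sqp) ^
              Nat.card {y : ZMod q // IsSquare y} *
            Equiv.Perm.sign (sqMulPerm ((m : ℕ) : ZMod q) unq sqq) ^
              Nat.card {x : ZMod p // IsSquare x} :=
          sign_sqMulPerm_prod _ _ _ unp sqp unq sqq
      _ = 1 := by rw [sp, one_pow, units_pow_even _ evp, mul_one]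
  -- sign of multiplication on squares mod p*q*r is 1
  have sτ : Equiv.Perm.sign (sqMulPerm ((m : ℕ) : ZMod (p * q * r)) unn sqn) = 1 := by
    calc Equiv.Perm.sign (sqMulPerm ((m : ℕ) : ZMod (p * q * r)) unn sqn)
        = Equiv.Perm.sign (sqMulPerm (φ1.toMulEquiv ((m : ℕ) : ZMod (p * q * r)))
            (unn.map φ1.toMulEquiv.toMonoidHom) (sqn.map φ1.toMulEquiv.toMonoidHom)) :=
          (sign_sqMulPerm_mulEquiv φ1.toMulEquiv _ unn sqn _ _).symm
      _ = Equiv.Perm.sign (sqMulPerm ((((m : ℕ) : ZMod (p * q)), ((m : ℕ) : ZMod r)))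
            (by rw [← hφ1m]; exact unn.map φ1.toMulEquiv.toMonoidHom)
            (by rw [← hφ1m]; exact sqn.map φ1.toMulEquiv.toMonoidHom)) :=
          sqMulPerm_congr hφ1m _ _ _ _
      _ = Equiv.Perm.sign (sqMulPerm ((m : ℕ) : ZMod (p * q)) unpq sqpq) ^
              Nat.card {y : ZMod r // IsSquare y} *
            Equiv.Perm.sign (sqMulPerm ((m : ℕ) : ZMod r) unr sqr) ^
              Nat.card {x : ZMod (p * q) // IsSquare x} :=
          sign_sqMulPerm_prod _ _ _ unpq sqpq unr sqr
      _ = 1 := by rw [spq, one_pow, units_pow_even _ evpq, mul_one]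
  -- units side
  let ψ1 : (ZMod (p * q * r))ˣ ≃* (ZMod (p * q))ˣ × (ZMod r)ˣ :=
    (Units.mapEquiv φ1.toMulEquiv).trans MulEquiv.prodUnits
  let ψ2 : (ZMod (p * q))ˣ ≃* (ZMod p)ˣ × (ZMod q)ˣ :=
    (Units.mapEquiv φ2.toMulEquiv).trans MulEquiv.prodUnits
  let mu : (ZMod (p * q * r))ˣ := ZMod.unitOfCoprime m hm
  have squn : IsSquare mu := by
    rw [← aux_isSquare_units, ZMod.coe_unitOfCoprime]
    exact sqn
  have evupq : Even (Nat.card {u : (ZMod (p * q))ˣ // IsSquare u}) := by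
    rw [← card_sq_congr ψ2, card_sq_prod]
    exact evuq.mul_left _
  have hsq1 : IsSquare (ψ1 mu) := squn.map ψ1.toMonoidHom
  have hsq11 : IsSquare (ψ1 mu).1 := ((aux_isSquare_prod _).mp hsq1).1
  have hsq12 : IsSquare (ψ1 mu).2 := ((aux_isSquare_prod _).mp hsq1).2
  have hsq2 : IsSquare (ψ2 (ψ1 mu).1) := hsq11.map ψ2.toMonoidHom
  have hsq21 : IsSquare (ψ2 (ψ1 mu).1).1 := ((aux_isSquare_prod _).mp hsq2).1
  have hsq22 : IsSquare (ψ2 (ψ1 mu).1).2 := ((aux_isSquare_prod _).mp hsq2).2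
  have sU1 : Equiv.Perm.sign (sqMulPerm (ψ1 mu).1 (Group.isUnit _) hsq11) =
      Equiv.Perm.sign (sqMulPerm (ψ2 (ψ1 mu).1).2 (Group.isUnit _) hsq22) ^
        Nat.card {u : (ZMod p)ˣ // IsSquare u} := by
    calc Equiv.Perm.sign (sqMulPerm (ψ1 mu).1 (Group.isUnit _) hsq11)
        = Equiv.Perm.sign (sqMulPerm (ψ2 (ψ1 mu).1) (Group.isUnit _) hsq2) :=
          (sign_sqMulPerm_mulEquiv ψ2 _ (Group.isUnit _) hsq11 _ _).symm
      _ = Equiv.Perm.sign (sqMulPerm (ψ2 (ψ1 mu).1).1 (Group.isUnit _) hsq21) ^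
              Nat.card {u : (ZMod q)ˣ // IsSquare u} *
            Equiv.Perm.sign (sqMulPerm (ψ2 (ψ1 mu).1).2 (Group.isUnit _) hsq22) ^
              Nat.card {u : (ZMod p)ˣ // IsSquare u} :=
          sign_sqMulPerm_prod _ _ _ _ hsq21 _ hsq22
      _ = _ := by rw [units_pow_even _ evuq, one_mul]
  have sσ : Equiv.Perm.sign (sqMulPerm mu (Group.isUnit mu) squn) = 1 := by
    calc Equiv.Perm.sign (sqMulPerm mu (Group.isUnit mu) squn)
        = Equiv.Perm.sign (sqMulPerm (ψ1 mu) (Group.isUnit _) hsq1) :=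
          (sign_sqMulPerm_mulEquiv ψ1 _ (Group.isUnit _) squn _ _).symm
      _ = Equiv.Perm.sign (sqMulPerm (ψ1 mu).1 (Group.isUnit _) hsq11) ^
              Nat.card {u : (ZMod r)ˣ // IsSquare u} *
            Equiv.Perm.sign (sqMulPerm (ψ1 mu).2 (Group.isUnit _) hsq12) ^
              Nat.card {u : (ZMod (p * q))ˣ // IsSquare u} :=
          sign_sqMulPerm_prod _ _ _ _ hsq11 _ hsq12
      _ = 1 := by
          rw [sU1, units_pow_even _ evupq, mul_one, ← pow_mul, units_pow_even]
          exact evur.mul_left _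
  constructor
  · obtain ⟨σ, hσ1, hσ2⟩ := exists_perm_of_sign mu (Group.isUnit mu) squn
      (QRunits (p * q * r) 1) (mem_QRunits_iff _) sσ
    refine ⟨σ, fun x => ?_, (sign_eq_of_instances _ _ _ _ σ).trans hσ2⟩
    have h := hσ1 x
    rw [h, Units.val_mul, ZMod.coe_unitOfCoprime]
  · obtain ⟨τ, hτ1, hτ2⟩ := exists_perm_of_sign ((m : ℕ) : ZMod (p * q * r)) unn sqn
      (QRset (p * q * r) 1) (mem_QRset_iff _) sτ
    exact ⟨τ, hτ1, (sign_eq_of_instances _ _ _ _ τ).trans hτ2⟩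
end
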